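/- The Lorentz transform sends (p₀, p) to ((√s)/2, (g/2)k̂) and (p₀*, p_*) to ((√s)/2, −(g/2)k̂): i.e., with Λ the boost with velocity v = (p+p_*)/(p₀+p₀*), we have p̃ + p̃_* = 0, |p̃| = |p̃_*| = g/2, and p̃₀ = p̃₀* = √s/2, where (p̃₀,p̃) = Λ(p₀,p) and (p̃₀*,p̃_*) = Λ(p₀*,p_*). -/

import Mathlib

/-! The boost is linear and preserves the Minkowski form `q₀² - ‖q‖²` as soon as
`ρ² (1 - ‖v‖²) = 1`, and it sends the total four-momentum `(E, E v)` to `(E / ρ, 0) = (√s, 0)`.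
So the boosted spatial momenta are opposite; as both particles have the same mass, the boosted
energies are then equal, hence both `√s / 2`. Invariance applied to the difference of the two
four-momenta gives `g² = ‖p̃ - p̃_*‖² = 4 ‖p̃‖²`. -/

open scoped RealInnerProductSpace

section Boost

variable {F : Type*} [NormedAddCommGroup F] [InnerProductSpace ℝ F]

noncomputable def lorentzBoost (ρ : ℝ) (v : F) : ℝ × F →ₗ[ℝ] ℝ × F where
  toFun q := (ρ * (q.1 - ⟪v, q.2⟫), q.2 + ((ρ - 1) * ⟪v, q.2⟫ / ‖v‖ ^ 2 - ρ * q.1) • v)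
  map_add' q q' := by
    ext
    · simp only [Prod.fst_add, Prod.snd_add, inner_add_right]; ring
    · simp only [Prod.fst_add, Prod.snd_add, inner_add_right]; module
  map_smul' a q := by
    ext
    · simp only [Prod.smul_fst, Prod.smul_snd, inner_smul_right, smul_eq_mul, RingHom.id_apply]
      ring
    · simp only [Prod.smul_fst, Prod.smul_snd, inner_smul_right, smul_eq_mul, RingHom.id_apply]
      module

def minkowskiSq (q : ℝ × F) : ℝ := q.1 ^ 2 - ‖q.2‖ ^ 2

variable {ρ : ℝ} {v : F}

@[simp]
theorem lorentzBoost_apply (q : ℝ × F) :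
    lorentzBoost ρ v q =
      (ρ * (q.1 - ⟪v, q.2⟫), q.2 + ((ρ - 1) * ⟪v, q.2⟫ / ‖v‖ ^ 2 - ρ * q.1) • v) :=
  rfl

theorem minkowskiSq_lorentzBoost (hρ : ρ ^ 2 * (1 - ‖v‖ ^ 2) = 1) (q : ℝ × F) :
    minkowskiSq (lorentzBoost ρ v q) = minkowskiSq q := by
  obtain rfl | hv := eq_or_ne v 0
  -- for `v = 0` the junk value `0 / 0 = 0` makes the boost `diag (ρ, 1)`, with `ρ ^ 2 = 1`
  · rw [norm_zero] at hρ
    simp only [minkowskiSq, lorentzBoost_apply, inner_zero_left,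
      smul_zero, add_zero, sub_zero, mul_pow]
    linear_combination q.1 ^ 2 * hρ
  have hW : ‖v‖ ^ 2 ≠ 0 := by positivity
  simp only [minkowskiSq, lorentzBoost_apply, norm_add_sq_real,
    inner_smul_right, norm_smul, mul_pow, Real.norm_eq_abs, sq_abs, real_inner_comm q.2 v]
  field_simp
  linear_combination (q.1 ^ 2 * ‖v‖ ^ 2 - ⟪q.2, v⟫ ^ 2) * hρ

theorem lorentzBoost_velocity (hρ : ρ ^ 2 * (1 - ‖v‖ ^ 2) = 1) (E : ℝ) :
    lorentzBoost ρ v (E, E • v) = (E / ρ, 0) := by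
  have hρ0 : ρ ≠ 0 := by rintro rfl; simp at hρ
  ext
  · simp only [lorentzBoost_apply, inner_smul_right, real_inner_self_eq_norm_sq]
    field_simp
    linear_combination E * hρ
  · obtain rfl | hv := eq_or_ne v 0
    · simp
    have hW : ‖v‖ ^ 2 ≠ 0 := by positivity
    simp only [lorentzBoost_apply, inner_smul_right, real_inner_self_eq_norm_sq]
    rw [mul_div_assoc, mul_div_cancel_right₀ _ hW, ← add_smul,
      show E + ((ρ - 1) * E - ρ * E) = 0 by ring, zero_smul]

theorem lorentzBoost_equal_mass_pair (hρ : ρ ^ 2 * (1 - ‖v‖ ^ 2) = 1) {q q' : ℝ × F} {E : ℝ}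
    (hE : E ≠ 0) (hsum : q + q' = (E, E • v)) (hmass : minkowskiSq q = minkowskiSq q') :
    (lorentzBoost ρ v q).2 + (lorentzBoost ρ v q').2 = 0 ∧
    (lorentzBoost ρ v q).1 = E / ρ / 2 ∧ (lorentzBoost ρ v q').1 = E / ρ / 2 ∧
    (2 * ‖(lorentzBoost ρ v q).2‖) ^ 2 = -minkowskiSq (q - q') := by
  have hρ0 : ρ ≠ 0 := by rintro rfl; simp at hρ
  set k := lorentzBoost ρ v q
  set k' := lorentzBoost ρ v q'
  have hk : k + k' = (E / ρ, 0) := by rw [← map_add, hsum, lorentzBoost_velocity hρ]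
  have hspace : k.2 + k'.2 = 0 := congrArg Prod.snd hk
  have htime : k.1 + k'.1 = E / ρ := congrArg Prod.fst hk
  have hk' : k'.2 = -k.2 := eq_neg_of_add_eq_zero_right hspace
  have hmass' : minkowskiSq k = minkowskiSq k' := by
    simp only [k, k', minkowskiSq_lorentzBoost hρ, hmass]
  have hsame : k.1 = k'.1 := by
    have h : (k.1 - k'.1) * (E / ρ) = 0 := by
      rw [minkowskiSq, minkowskiSq, hk', norm_neg] at hmass'
      linear_combination hmass' - (k.1 - k'.1) * htime
    exact sub_eq_zero.1 ((mul_eq_zero.1 h).resolve_right (div_ne_zero hE hρ0))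
  refine ⟨hspace, by linarith, by linarith, ?_⟩
  have hdiff : minkowskiSq (q - q') = minkowskiSq (k - k') := by
    rw [← map_sub, minkowskiSq_lorentzBoost hρ]
  rw [hdiff, minkowskiSq, Prod.fst_sub, Prod.snd_sub, hsame, hk', sub_neg_eq_add, ← two_smul ℝ,
    norm_smul, Real.norm_two]
  ring

theorem lorentzBoost_center_of_momentum {a x₀ y₀ s ρ : ℝ} {x y v : F} (ha : a ≠ 0)
    (hx₀ : x₀ = √(a ^ 2 + ‖x‖ ^ 2)) (hy₀ : y₀ = √(a ^ 2 + ‖y‖ ^ 2))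
    (hs : s = (x₀ + y₀) ^ 2 - ‖x + y‖ ^ 2) (hv : v = (x₀ + y₀)⁻¹ • (x + y))
    (hρ : ρ = (x₀ + y₀) / √s) :
    (lorentzBoost ρ v (x₀, x)).2 + (lorentzBoost ρ v (y₀, y)).2 = 0 ∧
    (lorentzBoost ρ v (x₀, x)).1 = √s / 2 ∧ (lorentzBoost ρ v (y₀, y)).1 = √s / 2 ∧
    2 * ‖(lorentzBoost ρ v (x₀, x)).2‖ = √(‖x - y‖ ^ 2 - (x₀ - y₀) ^ 2) := by
  have hx_lt : ‖x‖ < x₀ := hx₀ ▸ Real.lt_sqrt_of_sq_lt (lt_add_of_pos_left _ (by positivity))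
  have hy_lt : ‖y‖ < y₀ := hy₀ ▸ Real.lt_sqrt_of_sq_lt (lt_add_of_pos_left _ (by positivity))
  have hmass : minkowskiSq (x₀, x) = minkowskiSq (y₀, y) := by
    simp only [minkowskiSq, hx₀, hy₀]
    rw [Real.sq_sqrt (by positivity), Real.sq_sqrt (by positivity)]
    ring
  set E := x₀ + y₀
  have hE : 0 < E := by linarith [norm_nonneg x, norm_nonneg y]
  have hs_pos : 0 < s := by
    rw [hs]
    nlinarith [norm_nonneg (x + y), norm_add_le x y]
  have hsum : (x₀, x) + (y₀, y) = (E, E • v) := by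
    rw [hv, smul_inv_smul₀ hE.ne']
    rfl
  have hγ : ρ ^ 2 * (1 - ‖v‖ ^ 2) = 1 := by
    rw [hρ, hv, norm_smul, norm_inv, Real.norm_of_nonneg hE.le, div_pow, Real.sq_sqrt hs_pos.le]
    field_simp
    linarith
  have hE_div : E / ρ = √s := by rw [hρ, div_div_cancel₀ hE.ne']
  obtain ⟨hzero, htime, htime', hnorm⟩ := lorentzBoost_equal_mass_pair hγ hE.ne' hsum hmass
  refine ⟨hzero, hE_div ▸ htime, hE_div ▸ htime', ?_⟩
  rw [← Real.sqrt_sq (by positivity : 0 ≤ 2 * ‖(lorentzBoost ρ v (x₀, x)).2‖), hnorm]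
  simp only [minkowskiSq, Prod.mk_sub_mk, neg_sub]

end Boost

noncomputable def lorentzBoostMatrix {d : ℕ} (ρ : ℝ) (v : EuclideanSpace ℝ (Fin d)) :
    Matrix (Fin 1 ⊕ Fin d) (Fin 1 ⊕ Fin d) ℝ :=
  Matrix.fromBlocks
      (Matrix.of fun _ _ => ρ) (Matrix.of fun _ j => -ρ * v j)
      (Matrix.of fun i _ => -ρ * v i)
      (Matrix.of fun i j =>
        (if i = j then (1 : ℝ) else 0) + (ρ - 1) * v i * v j / ‖v‖ ^ 2)

theorem lorentzBoostMatrix_mulVec {d : ℕ} (ρ q₀ : ℝ) (v q : EuclideanSpace ℝ (Fin d)) :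
    (lorentzBoostMatrix ρ v).mulVec (Sum.elim (fun _ => q₀) (fun i => q i)) =
      Sum.elim (fun _ => (lorentzBoost ρ v (q₀, q)).1)
        (fun i => (lorentzBoost ρ v (q₀, q)).2 i) := by
  have hinner : ⟪v, q⟫ = ∑ i, v i * q i := by simp [PiLp.inner_apply, mul_comm]
  ext (i | i)
  · simp only [lorentzBoostMatrix, Matrix.mulVec, dotProduct, Fintype.sum_sum_type,
      Matrix.fromBlocks_apply₁₁, Matrix.fromBlocks_apply₁₂, Matrix.of_apply, Sum.elim_inl,
      Sum.elim_inr, Fin.sum_univ_one, lorentzBoost_apply, hinner, mul_sub, Finset.mul_sum]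
    simp only [neg_mul, Finset.sum_neg_distrib, mul_assoc, sub_eq_add_neg]
  · simp only [lorentzBoostMatrix, Matrix.mulVec, dotProduct, Fintype.sum_sum_type,
      Matrix.fromBlocks_apply₂₁, Matrix.fromBlocks_apply₂₂, Matrix.of_apply, Sum.elim_inl,
      Sum.elim_inr, Fin.sum_univ_one, lorentzBoost_apply, hinner, add_mul, Finset.sum_add_distrib,
      ite_mul, one_mul, zero_mul, Finset.sum_ite_eq, Finset.mem_univ, if_true,
      PiLp.add_apply, PiLp.smul_apply, smul_eq_mul]
    have hsum : ∑ j, (ρ - 1) * v i * v j / ‖v‖ ^ 2 * q j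
        = (ρ - 1) * v i / ‖v‖ ^ 2 * ∑ j, v j * q j := by
      rw [Finset.mul_sum]
      exact Finset.sum_congr rfl fun j _ => by ring
    rw [hsum]
    ring

theorem lorentz_transform_center_of_mass_general
    (d : ℕ) (m c : ℝ) (hm : 0 < m) (hc : 0 < c)
    (p pstar : EuclideanSpace ℝ (Fin d))
    (p₀ p₀s s g : ℝ)
    (hp₀ : p₀ = Real.sqrt ((m * c) ^ 2 + ‖p‖ ^ 2))
    (hp₀s : p₀s = Real.sqrt ((m * c) ^ 2 + ‖pstar‖ ^ 2))
    (hs : s = (p₀ + p₀s) ^ 2 - ‖p + pstar‖ ^ 2)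
    (hg : g = Real.sqrt (‖p - pstar‖ ^ 2 - (p₀ - p₀s) ^ 2))
    (v : EuclideanSpace ℝ (Fin d)) (hv : v = (p₀ + p₀s)⁻¹ • (p + pstar))
    (ρ : ℝ) (hρ : ρ = (p₀ + p₀s) / Real.sqrt s)
    (Λ : Matrix (Fin 1 ⊕ Fin d) (Fin 1 ⊕ Fin d) ℝ)
    (hΛ : Λ = Matrix.fromBlocks
      (Matrix.of fun _ _ => ρ) (Matrix.of fun _ j => -ρ * v j)
      (Matrix.of fun i _ => -ρ * v i)
      (Matrix.of fun i j =>
        (if i = j then (1 : ℝ) else 0) + (ρ - 1) * v i * v j / ‖v‖ ^ 2))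
    (P Pstar : Fin 1 ⊕ Fin d → ℝ)
    (hP : P = Sum.elim (fun _ => p₀) (fun i => p i))
    (hPstar : Pstar = Sum.elim (fun _ => p₀s) (fun i => pstar i))
    (pt pst : EuclideanSpace ℝ (Fin d))
    (hpt : pt = fun j => Λ.mulVec P (Sum.inr j))
    (hpst : pst = fun j => Λ.mulVec Pstar (Sum.inr j)) :
    pt + pst = 0 ∧ ‖pt‖ = g / 2 ∧ ‖pst‖ = g / 2 ∧
      Λ.mulVec P (Sum.inl 0) = Real.sqrt s / 2 ∧
      Λ.mulVec Pstar (Sum.inl 0) = Real.sqrt s / 2 := by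
  obtain ⟨hzero, htime, htime', hnorm⟩ :=
    lorentzBoost_center_of_momentum (by positivity : m * c ≠ 0) hp₀ hp₀s hs hv hρ
  have hΛP : Λ.mulVec P = Sum.elim (fun _ => (lorentzBoost ρ v (p₀, p)).1)
      (fun i => (lorentzBoost ρ v (p₀, p)).2 i) := by
    rw [hP, hΛ]; exact lorentzBoostMatrix_mulVec ρ p₀ v p
  have hΛPstar : Λ.mulVec Pstar = Sum.elim (fun _ => (lorentzBoost ρ v (p₀s, pstar)).1)
      (fun i => (lorentzBoost ρ v (p₀s, pstar)).2 i) := by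
    rw [hPstar, hΛ]; exact lorentzBoostMatrix_mulVec ρ p₀s v pstar
  have hpt' : pt = (lorentzBoost ρ v (p₀, p)).2 := by ext j; rw [hpt, hΛP]; rfl
  have hpst' : pst = (lorentzBoost ρ v (p₀s, pstar)).2 := by ext j; rw [hpst, hΛPstar]; rfl
  rw [← hpt', ← hpst'] at hzero
  rw [← hpt', ← hg] at hnorm
  refine ⟨hzero, by linarith, ?_, ?_, ?_⟩
  · rw [eq_neg_of_add_eq_zero_right hzero, norm_neg]; linarith
  · rw [hΛP, Sum.elim_inl, htime]
  · rw [hΛPstar, Sum.elim_inl, htime']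

/-- The Lorentz boost with velocity `v = (p+p_*)/(p₀+p₀*)` sends `(p₀,p)` to
`(√s/2, (g/2)k̂)` and `(p₀*,p_*)` to `(√s/2, −(g/2)k̂)`: the transformed spatial
momenta sum to zero, have norm `g/2`, and the transformed energies equal `√s/2`. -/
theorem lorentz_transform_center_of_mass
    (d : ℕ) (m c : ℝ) (hm : 0 < m) (hc : 0 < c)
    (p pstar : EuclideanSpace ℝ (Fin d)) (hne : p ≠ pstar)
    (p₀ p₀s s g : ℝ)
    (hp₀ : p₀ = Real.sqrt ((m * c) ^ 2 + ‖p‖ ^ 2))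
    (hp₀s : p₀s = Real.sqrt ((m * c) ^ 2 + ‖pstar‖ ^ 2))
    (hs : s = (p₀ + p₀s) ^ 2 - ‖p + pstar‖ ^ 2)
    (hg : g = Real.sqrt (‖p - pstar‖ ^ 2 - (p₀ - p₀s) ^ 2))
    (v : EuclideanSpace ℝ (Fin d)) (hv : v = (p₀ + p₀s)⁻¹ • (p + pstar))
    (hvne : v ≠ 0)
    (ρ : ℝ) (hρ : ρ = (p₀ + p₀s) / Real.sqrt s)
    (Λ : Matrix (Fin 1 ⊕ Fin d) (Fin 1 ⊕ Fin d) ℝ)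
    (hΛ : Λ = Matrix.fromBlocks
      (Matrix.of fun _ _ => ρ) (Matrix.of fun _ j => -ρ * v j)
      (Matrix.of fun i _ => -ρ * v i)
      (Matrix.of fun i j =>
        (if i = j then (1 : ℝ) else 0) + (ρ - 1) * v i * v j / ‖v‖ ^ 2))
    (P Pstar : Fin 1 ⊕ Fin d → ℝ)
    (hP : P = Sum.elim (fun _ => p₀) (fun i => p i))
    (hPstar : Pstar = Sum.elim (fun _ => p₀s) (fun i => pstar i))
    (pt pst : EuclideanSpace ℝ (Fin d))
    (hpt : pt = fun j => Λ.mulVec P (Sum.inr j))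
    (hpst : pst = fun j => Λ.mulVec Pstar (Sum.inr j)) :
    pt + pst = 0 ∧ ‖pt‖ = g / 2 ∧ ‖pst‖ = g / 2 ∧
      Λ.mulVec P (Sum.inl 0) = Real.sqrt s / 2 ∧
      Λ.mulVec Pstar (Sum.inl 0) = Real.sqrt s / 2 :=
  lorentz_transform_center_of_mass_general d m c hm hc p pstar p₀ p₀s s g hp₀ hp₀s hs hg v hv ρ hρ Λ
    hΛ P Pstar hP hPstar pt pst hpt hpst
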